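/- Telescoping sum of exponential weights: with α̂_{i,t} as in the quadratic-loss exponential weighting, averaging the per-step bound over t = 1,…,T yields (1/T) Σ_t (x_t - x̂_t)² ≤ -(1/(ηT)) log( (1/N) Σ_{i=1}^N exp(-η Σ_{t=1}^T (x̂_t^{(i)} - x_t)²) ) + (1/T) Σ_t (y_t² - 1/(2η))₊, and since Σ_i exp(-η Σ_t (x̂_t^{(i)}-x_t)²) ≥ exp(-η min_i Σ_t (x̂_t^{(i)}-x_t)²), the first term is at most min_i (1/T)Σ_t (x̂_t^{(i)}-x_t)² + (log N)/(Tη). -/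

import Mathlib

/-!
With `ℓ i t = (x̂⁽ⁱ⁾ t - x t)²` and `L i t = ∑ s < t, ℓ i s`, the potential
`W t = ∑ i, exp (-η L i t)` satisfies `W (t + 1) = W t * ∑ i, α̂ i t * exp (-η ℓ i t)`.
Since `z ↦ exp (-η' z²)` is concave on `[-y, y]` as soon as `2 η' y² ≤ 1`, Jensen's inequality
at the rate `η' = min η (1 / (2 y²))` bounds this mixture by
`exp (-η (x t - x̂ t)² + η (y t² - 1 / (2η))₊)`. Telescoping `log W` gives the first inequality;
`W T ≥ exp (-η L i T)` for every `i` gives the second.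
-/

open Finset Real

lemma concaveOn_exp_neg_mul_sq {η y : ℝ} (hη : 0 ≤ η) (hy : 2 * η * y ^ 2 ≤ 1) :
    ConcaveOn ℝ (Set.Icc (-y) y) fun z => exp (-η * z ^ 2) := by
  have hf' (z : ℝ) : HasDerivAt (fun z => exp (-η * z ^ 2)) (-2 * η * z * exp (-η * z ^ 2)) z :=
    ((hasDerivAt_pow 2 z).const_mul (-η)).exp.congr_deriv (by push_cast; ring)
  have hf'' (z : ℝ) : HasDerivAt (fun z => -2 * η * z * exp (-η * z ^ 2))
      (2 * η * (2 * η * z ^ 2 - 1) * exp (-η * z ^ 2)) z :=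
    (((hasDerivAt_id z).const_mul (-2 * η)).mul (hf' z)).congr_deriv (by simp only [id]; ring)
  refine concaveOn_of_hasDerivWithinAt2_nonpos (convex_Icc _ _)
    (Continuous.continuousOn (by fun_prop)) (fun z _ => (hf' z).hasDerivWithinAt)
    (fun z _ => (hf'' z).hasDerivWithinAt) fun z hz => ?_
  rw [interior_Icc] at hz
  have hz2 : z ^ 2 ≤ y ^ 2 := sq_le_sq' hz.1.le hz.2.le
  have : 2 * η * z ^ 2 - 1 ≤ 0 := by nlinarith
  exact mul_nonpos_of_nonpos_of_nonneg (mul_nonpos_of_nonneg_of_nonpos (by positivity) this)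
    (exp_pos _).le

lemma sum_mul_exp_neg_mul_sq_le {ι : Type*} {s : Finset ι} {v q : ι → ℝ} {η η' y : ℝ}
    (hη' : 0 ≤ η') (hη'η : η' ≤ η) (hy : 2 * η' * y ^ 2 ≤ 1)
    (hv0 : ∀ i ∈ s, 0 ≤ v i) (hv1 : ∑ i ∈ s, v i = 1) (hq : ∀ i ∈ s, |q i| ≤ y) :
    ∑ i ∈ s, v i * exp (-η * q i ^ 2) ≤
      exp (-η * (∑ i ∈ s, v i * q i) ^ 2 + (η - η') * y ^ 2) := by
  have hmem : ∀ i ∈ s, q i ∈ Set.Icc (-y) y := fun i hi => abs_le.1 (hq i hi)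
  have hmean : (∑ i ∈ s, v i * q i) ^ 2 ≤ y ^ 2 :=
    sq_le_sq' ((convex_Icc _ _).sum_mem hv0 hv1 hmem).1 ((convex_Icc _ _).sum_mem hv0 hv1 hmem).2
  calc ∑ i ∈ s, v i * exp (-η * q i ^ 2) ≤ ∑ i ∈ s, v i * exp (-η' * q i ^ 2) := by
        gcongr with i hi
        exact hv0 i hi
    _ ≤ exp (-η' * (∑ i ∈ s, v i * q i) ^ 2) :=
        (concaveOn_exp_neg_mul_sq hη' hy).le_map_sum hv0 hv1 hmem
    _ ≤ exp (-η * (∑ i ∈ s, v i * q i) ^ 2 + (η - η') * y ^ 2) := by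
        gcongr; nlinarith

lemma sum_mul_exp_neg_mul_sq_le_exp_posPart {ι : Type*} {s : Finset ι} {v q : ι → ℝ} {η y : ℝ}
    (hη : 0 < η) (hv0 : ∀ i ∈ s, 0 ≤ v i) (hv1 : ∑ i ∈ s, v i = 1) (hq : ∀ i ∈ s, |q i| ≤ y) :
    ∑ i ∈ s, v i * exp (-η * q i ^ 2) ≤
      exp (-η * (∑ i ∈ s, v i * q i) ^ 2 + η * max (y ^ 2 - 1 / (2 * η)) 0) := by
  by_cases hy : 2 * η * y ^ 2 ≤ 1
  · refine (sum_mul_exp_neg_mul_sq_le hη.le le_rfl hy hv0 hv1 hq).trans ?_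
    rw [exp_le_exp, sub_self, zero_mul, add_le_add_iff_left]
    positivity
  · have hy2 : 0 < y ^ 2 := by nlinarith
    have hy0 : y ≠ 0 := by rintro rfl; simp at hy2
    have hη' : 1 / (2 * y ^ 2) ≤ η := by rw [div_le_iff₀ (by positivity)]; linarith
    refine (sum_mul_exp_neg_mul_sq_le (by positivity) hη' (le_of_eq (by field_simp))
      hv0 hv1 hq).trans (le_of_eq ?_)
    rw [max_eq_left (by rw [sub_nonneg, div_le_iff₀ (by positivity)]; linarith)]
    field_simp

lemma le_mul_exp_sum_of_le_mul_exp {u g : ℕ → ℝ} (h : ∀ t, u (t + 1) ≤ u t * exp (g t)) (T : ℕ) :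
    u T ≤ u 0 * exp (∑ t ∈ range T, g t) := by
  induction T with
  | zero => simp
  | succ T ih =>
    calc u (T + 1) ≤ u T * exp (g T) := h T
      _ ≤ u 0 * exp (∑ t ∈ range T, g t) * exp (g T) := by gcongr
      _ = u 0 * exp (∑ t ∈ range (T + 1), g t) := by rw [sum_range_succ, exp_add, mul_assoc]

lemma neg_inv_mul_log_mean_exp_le_iInf_add {ι : Type*} [Fintype ι] [Nonempty ι] {c : ℝ}
    (hc : 0 < c) (L : ι → ℝ) :
    -(1 / c) * log ((1 / Fintype.card ι) * ∑ i, exp (-c * L i)) ≤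
      (⨅ i, L i) + log (Fintype.card ι) / c := by
  have hsum : 0 < ∑ i, exp (-c * L i) := sum_pos (fun _ _ => exp_pos _) univ_nonempty
  have hlog : log ((1 / Fintype.card ι) * ∑ i, exp (-c * L i)) =
      log (∑ i, exp (-c * L i)) - log (Fintype.card ι) := by
    rw [log_mul (by positivity) hsum.ne', one_div, log_inv]; ring
  rw [hlog, ← sub_le_iff_le_add]
  refine le_ciInf fun j => ?_
  have hj : -c * L j ≤ log (∑ i, exp (-c * L i)) := by
    rw [← log_exp (-c * L j)]
    exact log_le_log (exp_pos _)
      (single_le_sum (f := fun i => exp (-c * L i)) (fun i _ => (exp_pos _).le) (mem_univ j))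
  have : -(1 / c) * log (∑ i, exp (-c * L i)) ≤ L j :=
    calc -(1 / c) * log (∑ i, exp (-c * L i)) ≤ -(1 / c) * (-c * L j) :=
          mul_le_mul_of_nonpos_left hj (by simp only [one_div, neg_nonpos]; positivity)
      _ = L j := by field_simp
  linarith [show -(1 / c) * (log (∑ i, exp (-c * L i)) - log (Fintype.card ι)) -
    log (Fintype.card ι) / c = -(1 / c) * log (∑ i, exp (-c * L i)) by ring]

section ExponentialWeights

variable {ι : Type*} [Fintype ι] (η : ℝ) (ℓ : ι → ℕ → ℝ)

noncomputable def expWeightsPotential (t : ℕ) : ℝ :=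
  ∑ i, exp (-η * ∑ s ∈ range t, ℓ i s)

noncomputable def expWeight (i : ι) (t : ℕ) : ℝ :=
  exp (-η * ∑ s ∈ range t, ℓ i s) / expWeightsPotential η ℓ t

lemma expWeightsPotential_zero : expWeightsPotential η ℓ 0 = Fintype.card ι := by
  simp [expWeightsPotential]

variable [Nonempty ι]

lemma expWeightsPotential_pos (t : ℕ) : 0 < expWeightsPotential η ℓ t :=
  sum_pos (fun _ _ => exp_pos _) univ_nonempty

lemma expWeight_nonneg (i : ι) (t : ℕ) : 0 ≤ expWeight η ℓ i t :=
  div_nonneg (exp_pos _).le (expWeightsPotential_pos η ℓ t).le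

lemma sum_expWeight (t : ℕ) : ∑ i, expWeight η ℓ i t = 1 := by
  simp only [expWeight, ← sum_div]
  exact div_self (expWeightsPotential_pos η ℓ t).ne'

lemma expWeightsPotential_succ (t : ℕ) :
    expWeightsPotential η ℓ (t + 1) =
      expWeightsPotential η ℓ t * ∑ i, expWeight η ℓ i t * exp (-η * ℓ i t) := by
  have hW := (expWeightsPotential_pos η ℓ t).ne'
  calc expWeightsPotential η ℓ (t + 1)
      = ∑ i, exp (-η * ∑ s ∈ range t, ℓ i s) * exp (-η * ℓ i t) := by
        simp only [expWeightsPotential, sum_range_succ, mul_add, exp_add]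
    _ = expWeightsPotential η ℓ t * ∑ i, expWeight η ℓ i t * exp (-η * ℓ i t) := by
        simp only [mul_sum, expWeight]
        exact sum_congr rfl fun i _ => by field_simp

lemma log_mean_expWeightsPotential_le {g : ℕ → ℝ}
    (h : ∀ t, expWeightsPotential η ℓ (t + 1) ≤ expWeightsPotential η ℓ t * exp (g t)) (T : ℕ) :
    log ((1 / Fintype.card ι) * expWeightsPotential η ℓ T) ≤ ∑ t ∈ range T, g t := by
  have hT := le_mul_exp_sum_of_le_mul_exp h T
  rw [expWeightsPotential_zero] at hT
  rw [log_le_iff_le_exp (mul_pos (by positivity) (expWeightsPotential_pos η ℓ T)), one_div,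
    inv_mul_le_iff₀ (by positivity)]
  exact hT

lemma expWeightsPotential_sq_succ_le (hη : 0 < η) {p : ι → ℕ → ℝ} {x y : ℕ → ℝ} (t : ℕ)
    (hdev : ∀ i, |p i t - x t| ≤ y t) :
    expWeightsPotential η (fun i t => (p i t - x t) ^ 2) (t + 1) ≤
      expWeightsPotential η (fun i t => (p i t - x t) ^ 2) t *
        exp (-η * (x t - ∑ i, expWeight η (fun i t => (p i t - x t) ^ 2) i t * p i t) ^ 2 +
          η * max (y t ^ 2 - 1 / (2 * η)) 0) := by
  set ℓ : ι → ℕ → ℝ := fun i t => (p i t - x t) ^ 2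
  have hmean : ∑ i, expWeight η ℓ i t * (p i t - x t) =
      -(x t - ∑ i, expWeight η ℓ i t * p i t) := by
    simp only [mul_sub, sum_sub_distrib, ← sum_mul, sum_expWeight]
    ring
  rw [expWeightsPotential_succ, ← neg_sq, ← hmean]
  exact mul_le_mul_of_nonneg_left (sum_mul_exp_neg_mul_sq_le_exp_posPart hη
    (fun i _ => expWeight_nonneg η ℓ i t) (sum_expWeight η ℓ t) fun i _ => hdev i)
    (expWeightsPotential_pos η ℓ t).le

end ExponentialWeights

/-- Telescoping sum of exponential weights: with weights
`w i t ∝ exp(-η ∑_{s<t} (xh i s - x s)²)`, averaging the per-step bound over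
`t = 1, …, T` yields
`(1/T) ∑_t (x t - agg t)² ≤ -(1/(ηT)) log((1/N) ∑_i exp(-η ∑_t (xh i t - x t)²))
  + (1/T) ∑_t (y t² - 1/(2η))₊`,
and the first term on the right is at most
`min_i (1/T) ∑_t (xh i t - x t)² + (log N)/(Tη)`. -/
theorem aggregation_quadratic_loss_telescoping
    (N T : ℕ) (hN : 0 < N) (hT : 0 < T) (η : ℝ) (hη : 0 < η)
    (x : ℕ → ℝ) (xh : Fin N → ℕ → ℝ)
    (w : Fin N → ℕ → ℝ)
    (hw : ∀ i t, w i t =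
      Real.exp (-η * ∑ s ∈ range t, (xh i s - x s) ^ 2) /
        ∑ k : Fin N, Real.exp (-η * ∑ s ∈ range t, (xh k s - x s) ^ 2))
    (agg : ℕ → ℝ) (hagg : ∀ t, agg t = ∑ i : Fin N, w i t * xh i t)
    (y : ℕ → ℝ) (hy : ∀ t, y t = |x t| + ⨆ i : Fin N, |xh i t|) :
    (1 / T) * ∑ t ∈ range T, (x t - agg t) ^ 2 ≤
      -(1 / (η * T)) * Real.log
          ((1 / N) * ∑ i : Fin N, Real.exp (-η * ∑ t ∈ range T, (xh i t - x t) ^ 2)) +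
        (1 / T) * ∑ t ∈ range T, max ((y t) ^ 2 - 1 / (2 * η)) 0 ∧
    -(1 / (η * T)) * Real.log
        ((1 / N) * ∑ i : Fin N, Real.exp (-η * ∑ t ∈ range T, (xh i t - x t) ^ 2)) ≤
      (⨅ i : Fin N, (1 / T) * ∑ t ∈ range T, (xh i t - x t) ^ 2) +
        Real.log N / (T * η) := by
  have : Nonempty (Fin N) := ⟨⟨0, hN⟩⟩
  set ℓ : Fin N → ℕ → ℝ := fun i t => (xh i t - x t) ^ 2
  have hw' : w = expWeight η ℓ := funext fun i => funext fun t => hw i t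
  subst hw'
  have hdev (t : ℕ) (i : Fin N) : |xh i t - x t| ≤ y t := by
    rw [hy, add_comm]
    exact (abs_sub _ _).trans (add_le_add_left
      (le_ciSup (f := fun i => |xh i t|) (Finite.bddAbove_range _) i) _)
  have hstep (t : ℕ) : expWeightsPotential η ℓ (t + 1) ≤ expWeightsPotential η ℓ t *
      exp (-η * (x t - agg t) ^ 2 + η * max (y t ^ 2 - 1 / (2 * η)) 0) := by
    rw [hagg]
    exact expWeightsPotential_sq_succ_le η hη t (hdev t)
  have hlog := log_mean_expWeightsPotential_le η ℓ hstep T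
  rw [sum_add_distrib, ← mul_sum, ← mul_sum, Fintype.card_fin] at hlog
  have hηT : 0 < η * T := mul_pos hη (Nat.cast_pos.2 hT)
  constructor
  · change _ ≤ -(1 / (η * T)) * log ((1 / N) * expWeightsPotential η ℓ T) + _
    set S := ∑ t ∈ range T, (x t - agg t) ^ 2
    set M := ∑ t ∈ range T, max (y t ^ 2 - 1 / (2 * η)) 0
    calc (1 / T) * S = -(1 / (η * T)) * (-η * S + η * M) + (1 / T) * M := by
          field_simp
          ring
      _ ≤ _ := by
          gcongr ?_ + _
          exact mul_le_mul_of_nonpos_left hlog (by simp only [one_div, neg_nonpos]; positivity)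
  · have hrescale (S : ℝ) : -(η * T) * ((1 / T) * S) = -η * S := by field_simp
    have h := neg_inv_mul_log_mean_exp_le_iInf_add hηT
      fun i => (1 / T) * ∑ t ∈ range T, (xh i t - x t) ^ 2
    rw [mul_comm (T : ℝ) η]
    simpa only [hrescale, Fintype.card_fin] using h
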